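/- Let p be a prime, e ≥ 1, and A, B ∈ R = ℤ/p^eℤ. Let e₁, e₂ ≥ 1 and let X₁, Z₁, X₂, Z₂ ∈ R satisfy p^(e₁) ∣ X₁, p^(e₂) ∣ X₂, p ∣ Z₁, p ∣ Z₂, and the curve equations Zᵢ = Xᵢ³ + A·Xᵢ·Zᵢ² + B·Zᵢ³ for i = 1, 2. Set m = min(e₁, e₂) and let T₁, T₂, T₃ be the Bosma–Lenstra addition-law polynomials evaluated at these data. Then modulo p^(5m) one has: T₁ ≡ X₁ + X₂, T₂ ≡ 1 + 3A·X₁²·X₂², and T₃ ≡ (X₁ + X₂)³; i.e. (p : R)^(5m) divides each of T₁ − (X₁+X₂), T₂ − (1 + 3A·X₁²·X₂²), and T₃ − (X₁+X₂)³. -/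

import Mathlib

/-!
Give `X` weight 1 and `Z` weight 3. On the curve `Z = X³ + A·X·Z² + B·Z³`, if `π^m ∣ X` and
`π ∣ Z`, then the right-hand side improves any bound `π^k ∣ Z` with `1 ≤ k < 3m` to `π^(k+1) ∣ Z`,
so `(π^m)³ ∣ Z`. Every monomial of `T₁ − (X₁+X₂)` and `T₂ − (1 + 3A·X₁²·X₂²)` has weight at
least 5, and the same holds for `T₃ − (X₁+X₂)³` once the cubes `Xᵢ³` are traded for `Zᵢ` through
the curve equations.
-/

/-- First Bosma–Lenstra addition-law polynomial, specialized at `Y₁ = Y₂ = 1`. -/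
def bosmaLenstraT1 {R : Type*} [CommRing R] (A B X₁ Z₁ X₂ Z₂ : R) : R :=
  (X₁ + X₂) - A * X₁ * X₂ * (Z₁ + Z₂) - A * (X₁ + X₂) * (X₁ * Z₂ + X₂ * Z₁)
    - 3 * B * (X₁ + X₂) * Z₁ * Z₂ - 3 * B * (X₁ * Z₂ + X₂ * Z₁) * (Z₁ + Z₂)
    + A ^ 2 * (Z₁ + Z₂) * Z₁ * Z₂

/-- Second Bosma–Lenstra addition-law polynomial, specialized at `Y₁ = Y₂ = 1`. -/
def bosmaLenstraT2 {R : Type*} [CommRing R] (A B X₁ Z₁ X₂ Z₂ : R) : R :=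
  1 + 3 * A * X₁ ^ 2 * X₂ ^ 2 + 9 * B * X₁ * X₂ * (X₁ * Z₂ + X₂ * Z₁)
    - A ^ 2 * X₁ * Z₂ * (X₁ * Z₂ + 2 * X₂ * Z₁)
    - A ^ 2 * X₂ * Z₁ * (2 * X₁ * Z₂ + X₂ * Z₁)
    - 3 * A * B * Z₁ * Z₂ * (X₁ * Z₂ + X₂ * Z₁)
    - (A ^ 3 + 9 * B ^ 2) * Z₁ ^ 2 * Z₂ ^ 2

/-- Third Bosma–Lenstra addition-law polynomial, specialized at `Y₁ = Y₂ = 1`. -/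
def bosmaLenstraT3 {R : Type*} [CommRing R] (A B X₁ Z₁ X₂ Z₂ : R) : R :=
  3 * X₁ * X₂ * (X₁ + X₂) + (Z₁ + Z₂) + A * (X₁ + X₂) * Z₁ * Z₂
    + A * (X₁ * Z₂ + X₂ * Z₁) * (Z₁ + Z₂) + 3 * B * (Z₁ + Z₂) * Z₁ * Z₂

section WeightedDivisibility

variable {R : Type*} [CommRing R]

theorem pow_min_dvd_of_weierstrass {π A B X Z : R} {m : ℕ} (hX : π ^ m ∣ X) (hZ : π ∣ Z)
    (heq : Z = X ^ 3 + A * X * Z ^ 2 + B * Z ^ 3) (n : ℕ) :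
    π ^ min (3 * m) (n + 1) ∣ Z := by
  induction n with
  | zero => exact (pow_dvd_pow π (min_le_right _ _)).trans (by simpa using hZ)
  | succ n ih =>
    set k := min (3 * m) (n + 1)
    have hX3 : π ^ (3 * m) ∣ X ^ 3 := by
      simpa [← pow_mul, mul_comm] using pow_dvd_pow_of_dvd hX 3
    have hXZ2 : π ^ (m + 2 * k) ∣ A * X * Z ^ 2 := by
      simpa [← pow_mul, ← pow_add, mul_comm] using
        mul_dvd_mul (hX.mul_left A) (pow_dvd_pow_of_dvd ih 2)
    have hZ3 : π ^ (3 * k) ∣ B * Z ^ 3 := by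
      simpa [← pow_mul, mul_comm] using (pow_dvd_pow_of_dvd ih 3).mul_left B
    rw [heq]
    refine dvd_add (dvd_add ?_ ?_) ?_
    · exact (pow_dvd_pow π (by omega)).trans hX3
    · exact (pow_dvd_pow π (by omega)).trans hXZ2
    · exact (pow_dvd_pow π (by omega)).trans hZ3

theorem pow_three_dvd_of_weierstrass {π A B X Z : R} {m : ℕ} (hX : π ^ m ∣ X) (hZ : π ∣ Z)
    (heq : Z = X ^ 3 + A * X * Z ^ 2 + B * Z ^ 3) :
    (π ^ m) ^ 3 ∣ Z := by
  simpa [← pow_mul, mul_comm, min_eq_left] using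
    pow_min_dvd_of_weierstrass hX hZ heq (3 * m)

variable {u A B X₁ Z₁ X₂ Z₂ : R}

theorem pow_five_dvd_bosmaLenstraT1_sub (hX₁ : u ∣ X₁) (hX₂ : u ∣ X₂)
    (hZ₁ : u ^ 3 ∣ Z₁) (hZ₂ : u ^ 3 ∣ Z₂) :
    u ^ 5 ∣ bosmaLenstraT1 A B X₁ Z₁ X₂ Z₂ - (X₁ + X₂) := by
  obtain ⟨x₁, rfl⟩ := hX₁
  obtain ⟨x₂, rfl⟩ := hX₂
  obtain ⟨z₁, rfl⟩ := hZ₁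
  obtain ⟨z₂, rfl⟩ := hZ₂
  refine ⟨A ^ 2 * u ^ 4 * (z₁ + z₂) * z₁ * z₂ - A * x₁ * x₂ * (z₁ + z₂)
    - A * (x₁ + x₂) * (x₁ * z₂ + x₂ * z₁) - 3 * B * u ^ 2 * (x₁ + x₂) * z₁ * z₂
    - 3 * B * u ^ 2 * (x₁ * z₂ + x₂ * z₁) * (z₁ + z₂), ?_⟩
  unfold bosmaLenstraT1
  ring

theorem pow_five_dvd_bosmaLenstraT2_sub (hX₁ : u ∣ X₁) (hX₂ : u ∣ X₂)
    (hZ₁ : u ^ 3 ∣ Z₁) (hZ₂ : u ^ 3 ∣ Z₂) :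
    u ^ 5 ∣ bosmaLenstraT2 A B X₁ Z₁ X₂ Z₂ - (1 + 3 * A * X₁ ^ 2 * X₂ ^ 2) := by
  obtain ⟨x₁, rfl⟩ := hX₁
  obtain ⟨x₂, rfl⟩ := hX₂
  obtain ⟨z₁, rfl⟩ := hZ₁
  obtain ⟨z₂, rfl⟩ := hZ₂
  refine ⟨9 * B * u * x₁ * x₂ * (x₁ * z₂ + x₂ * z₁)
    - A ^ 2 * u ^ 3 * x₁ * z₂ * (x₁ * z₂ + 2 * x₂ * z₁)
    - A ^ 2 * u ^ 3 * x₂ * z₁ * (2 * x₁ * z₂ + x₂ * z₁)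
    - 3 * A * B * u ^ 5 * z₁ * z₂ * (x₁ * z₂ + x₂ * z₁)
    - (A ^ 3 + 9 * B ^ 2) * u ^ 7 * z₁ ^ 2 * z₂ ^ 2, ?_⟩
  unfold bosmaLenstraT2
  ring

theorem pow_five_dvd_bosmaLenstraT3_sub (hX₁ : u ∣ X₁) (hX₂ : u ∣ X₂)
    (hZ₁ : u ^ 3 ∣ Z₁) (hZ₂ : u ^ 3 ∣ Z₂)
    (heq₁ : Z₁ = X₁ ^ 3 + A * X₁ * Z₁ ^ 2 + B * Z₁ ^ 3)
    (heq₂ : Z₂ = X₂ ^ 3 + A * X₂ * Z₂ ^ 2 + B * Z₂ ^ 3) :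
    u ^ 5 ∣ bosmaLenstraT3 A B X₁ Z₁ X₂ Z₂ - (X₁ + X₂) ^ 3 := by
  obtain ⟨x₁, rfl⟩ := hX₁
  obtain ⟨x₂, rfl⟩ := hX₂
  obtain ⟨z₁, rfl⟩ := hZ₁
  obtain ⟨z₂, rfl⟩ := hZ₂
  refine ⟨A * u ^ 2 * x₁ * z₁ ^ 2 + B * u ^ 4 * z₁ ^ 3 + A * u ^ 2 * x₂ * z₂ ^ 2
    + B * u ^ 4 * z₂ ^ 3 + A * u ^ 2 * (x₁ + x₂) * z₁ * z₂
    + A * u ^ 2 * (x₁ * z₂ + x₂ * z₁) * (z₁ + z₂) + 3 * B * u ^ 4 * (z₁ + z₂) * z₁ * z₂, ?_⟩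
  unfold bosmaLenstraT3
  linear_combination heq₁ + heq₂

end WeightedDivisibility

theorem infinity_sum_addition_law_congruences
    {p : ℕ} {e : ℕ}
    (A B : ZMod (p ^ e)) {e₁ e₂ : ℕ}
    (X₁ Z₁ X₂ Z₂ : ZMod (p ^ e))
    (hX₁ : (p : ZMod (p ^ e)) ^ e₁ ∣ X₁) (hX₂ : (p : ZMod (p ^ e)) ^ e₂ ∣ X₂)
    (hZ₁ : (p : ZMod (p ^ e)) ∣ Z₁) (hZ₂ : (p : ZMod (p ^ e)) ∣ Z₂)
    (heq₁ : Z₁ = X₁ ^ 3 + A * X₁ * Z₁ ^ 2 + B * Z₁ ^ 3)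
    (heq₂ : Z₂ = X₂ ^ 3 + A * X₂ * Z₂ ^ 2 + B * Z₂ ^ 3) :
    (p : ZMod (p ^ e)) ^ (5 * min e₁ e₂) ∣
        bosmaLenstraT1 A B X₁ Z₁ X₂ Z₂ - (X₁ + X₂) ∧
    (p : ZMod (p ^ e)) ^ (5 * min e₁ e₂) ∣
        bosmaLenstraT2 A B X₁ Z₁ X₂ Z₂ - (1 + 3 * A * X₁ ^ 2 * X₂ ^ 2) ∧
    (p : ZMod (p ^ e)) ^ (5 * min e₁ e₂) ∣
        bosmaLenstraT3 A B X₁ Z₁ X₂ Z₂ - (X₁ + X₂) ^ 3 := by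
  have hX₁' := (pow_dvd_pow (p : ZMod (p ^ e)) (min_le_left e₁ e₂)).trans hX₁
  have hX₂' := (pow_dvd_pow (p : ZMod (p ^ e)) (min_le_right e₁ e₂)).trans hX₂
  have hZ₁' := pow_three_dvd_of_weierstrass hX₁' hZ₁ heq₁
  have hZ₂' := pow_three_dvd_of_weierstrass hX₂' hZ₂ heq₂
  rw [mul_comm, pow_mul]
  exact ⟨pow_five_dvd_bosmaLenstraT1_sub hX₁' hX₂' hZ₁' hZ₂',
    pow_five_dvd_bosmaLenstraT2_sub hX₁' hX₂' hZ₁' hZ₂',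
    pow_five_dvd_bosmaLenstraT3_sub hX₁' hX₂' hZ₁' hZ₂' heq₁ heq₂⟩
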